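/- Let D be a k-derivation of T with D(E₁₁) = D(E₂₂) = D(E₃₃) = 0, determined by a, b, c ∈ k[β] via D(E₁₂) = a·E₁₂, D(β·E₂₂) = b·E₂₂, D(E₂₃) = c·E₂₃, and suppose D maps I(n; n′, n″; V) into itself. Then the induced k-derivation of A = T / I(n; n′, n″; V) is inner if and only if β^m divides (a + c) − (a(0) + c(0)) in k[β] and β^n divides b in k[β]. -/

import Mathlib

open Polynomial Matrix

noncomputable section

/-- `Algebra` structure on the quotient of a `k`-algebra by a ring congruence. -/
instance RingConQuotient.algebra (k R : Type*) [CommSemiring k] [Ring R] [Algebra k R]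
    (c : RingCon R) : Algebra k c.Quotient where
  algebraMap := (RingCon.mk' c).comp (algebraMap k R)
  commutes' := by
    intro r x
    induction x using Quotient.ind
    exact congrArg _ (Algebra.commutes r _)
  smul_def' := by
    intro r x
    induction x using Quotient.ind
    exact congrArg _ (Algebra.smul_def r _)

variable (k : Type*) [Field k]

/-- `D` is a `k`-derivation (as a linear endomorphism of a `k`-algebra). -/
def IsDer {R : Type*} [Ring R] [Algebra k R] (D : R →ₗ[k] R) : Prop :=
  ∀ x y : R, D (x * y) = D x * y + x * D y

/-- `D` is an inner derivation. -/
def IsInner {R : Type*} [Ring R] [Algebra k R] (D : R →ₗ[k] R) : Prop :=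
  ∃ a : R, ∀ x : R, D x = a * x - x * a

/-- The ideal `(β^j)` of `k[β]`, as a `k`-submodule. -/
def Bsub (j : ℕ) : Submodule k (Polynomial k) where
  carrier := {p | X ^ j ∣ p}
  zero_mem' := dvd_zero _
  add_mem' := fun h1 h2 => dvd_add h1 h2
  smul_mem' := fun c p hp => by
    simpa [Polynomial.smul_eq_C_mul] using Dvd.dvd.mul_left hp (C c)

lemma mem_Bsub {k : Type*} [Field k] {j : ℕ} {p : Polynomial k} :
    p ∈ Bsub k j ↔ X ^ j ∣ p := Iff.rfl

/-- The algebra `T`: upper triangular 3×3 matrices over `k[β]` whose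
`(1,1)` and `(3,3)` entries are constants. -/
def Tsub : Subalgebra k (Matrix (Fin 3) (Fin 3) (Polynomial k)) where
  carrier := {M | (∀ i j : Fin 3, j < i → M i j = 0) ∧
      (∃ x : k, M 0 0 = C x) ∧ (∃ z : k, M 2 2 = C z)}
  zero_mem' := ⟨fun _ _ _ => rfl, ⟨0, by simp⟩, ⟨0, by simp⟩⟩
  one_mem' := ⟨fun i j h => Matrix.one_apply_ne h.ne', ⟨1, by simp⟩, ⟨1, by simp⟩⟩
  add_mem' := by
    rintro a b ⟨hal, ⟨x, hax⟩, ⟨z, haz⟩⟩ ⟨hbl, ⟨y, hby⟩, ⟨w, hbw⟩⟩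
    refine ⟨fun i j h => by simp [hal i j h, hbl i j h], ⟨x + y, by simp [hax, hby]⟩,
      ⟨z + w, by simp [haz, hbw]⟩⟩
  mul_mem' := by
    rintro a b ⟨hal, ⟨x, hax⟩, ⟨z, haz⟩⟩ ⟨hbl, ⟨y, hby⟩, ⟨w, hbw⟩⟩
    refine ⟨fun i j h => ?_, ⟨x * y, ?_⟩, ⟨z * w, ?_⟩⟩
    · rw [Matrix.mul_apply]
      apply Finset.sum_eq_zero
      intro l _
      rcases lt_or_ge l i with hl | hl
      · rw [hal i l hl, zero_mul]
      · rw [hbl l j (lt_of_lt_of_le h hl), mul_zero]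
    · rw [Matrix.mul_apply, Fin.sum_univ_three,
        hbl 1 0 (by decide), hbl 2 0 (by decide), hax, hby]
      simp
    · rw [Matrix.mul_apply, Fin.sum_univ_three,
        hal 2 0 (by decide), hal 2 1 (by decide), haz, hbw]
      simp
  algebraMap_mem' := by
    intro r
    refine ⟨fun i j h => ?_, ⟨r, ?_⟩, ⟨r, ?_⟩⟩
    · rw [Matrix.algebraMap_matrix_apply, if_neg h.ne']
    · rw [Matrix.algebraMap_matrix_apply, if_pos rfl]; rfl
    · rw [Matrix.algebraMap_matrix_apply, if_pos rfl]; rfl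

/-- The matrix `p·E₁₂` as an element of `T`. -/
def tE12 (p : Polynomial k) : Tsub k :=
  ⟨Matrix.single 0 1 p, by
    refine ⟨fun i j h => ?_, ⟨0, ?_⟩, ⟨0, ?_⟩⟩
    · fin_cases i <;> fin_cases j <;> simp_all [Matrix.single, Matrix.of_apply]
    · simp [Matrix.single, Matrix.of_apply]
    · simp [Matrix.single, Matrix.of_apply]⟩

/-- The matrix `p·E₂₂` as an element of `T`. -/
def tE22 (p : Polynomial k) : Tsub k :=
  ⟨Matrix.single 1 1 p, by
    refine ⟨fun i j h => ?_, ⟨0, ?_⟩, ⟨0, ?_⟩⟩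
    · fin_cases i <;> fin_cases j <;> simp_all [Matrix.single, Matrix.of_apply]
    · simp [Matrix.single, Matrix.of_apply]
    · simp [Matrix.single, Matrix.of_apply]⟩

/-- The matrix `p·E₂₃` as an element of `T`. -/
def tE23 (p : Polynomial k) : Tsub k :=
  ⟨Matrix.single 1 2 p, by
    refine ⟨fun i j h => ?_, ⟨0, ?_⟩, ⟨0, ?_⟩⟩
    · fin_cases i <;> fin_cases j <;> simp_all [Matrix.single, Matrix.of_apply]
    · simp [Matrix.single, Matrix.of_apply]
    · simp [Matrix.single, Matrix.of_apply]⟩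

/-- The matrix `p·E₁₃` as an element of `T`. -/
def tE13 (p : Polynomial k) : Tsub k :=
  ⟨Matrix.single 0 2 p, by
    refine ⟨fun i j h => ?_, ⟨0, ?_⟩, ⟨0, ?_⟩⟩
    · fin_cases i <;> fin_cases j <;> simp_all [Matrix.single, Matrix.of_apply]
    · simp [Matrix.single, Matrix.of_apply]
    · simp [Matrix.single, Matrix.of_apply]⟩

/-- The idempotent `E₁₁` as an element of `T`. -/
def tE11 : Tsub k :=
  ⟨Matrix.single 0 0 1, by
    refine ⟨fun i j h => ?_, ⟨1, ?_⟩, ⟨0, ?_⟩⟩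
    · fin_cases i <;> fin_cases j <;> simp_all [Matrix.single, Matrix.of_apply]
    · simp [Matrix.single, Matrix.of_apply]
    · simp [Matrix.single, Matrix.of_apply]⟩

/-- The idempotent `E₂₂` as an element of `T`. -/
def tE22one : Tsub k := tE22 k 1

/-- The idempotent `E₃₃` as an element of `T`. -/
def tE33 : Tsub k :=
  ⟨Matrix.single 2 2 1, by
    refine ⟨fun i j h => ?_, ⟨0, ?_⟩, ⟨1, ?_⟩⟩
    · fin_cases i <;> fin_cases j <;> simp_all [Matrix.single, Matrix.of_apply]
    · simp [Matrix.single, Matrix.of_apply]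
    · simp [Matrix.single, Matrix.of_apply]⟩

/-- The underlying set of the ideal `I(n; n', n''; V)` of `T`. -/
def Icar (n n' n'' : ℕ) (V : Submodule k (Polynomial k)) : Set (Tsub k) :=
  {M | (M : Matrix (Fin 3) (Fin 3) (Polynomial k)) 0 0 = 0 ∧
       (M : Matrix (Fin 3) (Fin 3) (Polynomial k)) 2 2 = 0 ∧
       X ^ n' ∣ (M : Matrix (Fin 3) (Fin 3) (Polynomial k)) 0 1 ∧
       (M : Matrix (Fin 3) (Fin 3) (Polynomial k)) 0 2 ∈ V ∧
       X ^ n ∣ (M : Matrix (Fin 3) (Fin 3) (Polynomial k)) 1 1 ∧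
       X ^ n'' ∣ (M : Matrix (Fin 3) (Fin 3) (Polynomial k)) 1 2}

variable {k}

lemma Tsub_lower {a : Tsub k} :
    ∀ i j : Fin 3, j < i → (a : Matrix (Fin 3) (Fin 3) (Polynomial k)) i j = 0 := a.2.1

lemma Tsub_00 (a : Tsub k) : ∃ x : k, (a : Matrix (Fin 3) (Fin 3) (Polynomial k)) 0 0 = C x :=
  a.2.2.1

lemma Tsub_22 (a : Tsub k) : ∃ z : k, (a : Matrix (Fin 3) (Fin 3) (Polynomial k)) 2 2 = C z :=
  a.2.2.2

variable (k)

/-- The two-sided ideal `I(n; n', n''; V)` of `T`. -/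
def Itsi (n n' n'' : ℕ) (V : Submodule k (Polynomial k)) (hn' : n' ≤ n) (hn'' : n'' ≤ n)
    (hV : ∀ p : Polynomial k, X ^ min n' n'' ∣ p → p ∈ V) : TwoSidedIdeal (Tsub k) :=
  TwoSidedIdeal.mk' (Icar k n n' n'' V)
    (by
      refine ⟨rfl, rfl, ?_, ?_, ?_, ?_⟩ <;> simp)
    (by
      rintro a b ⟨h1, h2, h3, h4, h5, h6⟩ ⟨g1, g2, g3, g4, g5, g6⟩
      refine ⟨?_, ?_, ?_, ?_, ?_, ?_⟩ <;>
        simp only [AddMemClass.coe_add, Matrix.add_apply]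
      · rw [h1, g1, add_zero]
      · rw [h2, g2, add_zero]
      · exact dvd_add h3 g3
      · exact V.add_mem h4 g4
      · exact dvd_add h5 g5
      · exact dvd_add h6 g6)
    (by
      rintro a ⟨h1, h2, h3, h4, h5, h6⟩
      refine ⟨?_, ?_, ?_, ?_, ?_, ?_⟩ <;>
        simp only [NegMemClass.coe_neg, Matrix.neg_apply]
      · rw [h1, neg_zero]
      · rw [h2, neg_zero]
      · exact dvd_neg.mpr h3
      · exact V.neg_mem h4
      · exact dvd_neg.mpr h5
      · exact dvd_neg.mpr h6)
    (by
      rintro t a ⟨h1, h2, h3, h4, h5, h6⟩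
      have hta : ((t * a : Tsub k) : Matrix (Fin 3) (Fin 3) (Polynomial k)) =
          (t : Matrix (Fin 3) (Fin 3) (Polynomial k)) * a := rfl
      obtain ⟨x, hx⟩ := Tsub_00 t
      refine ⟨?_, ?_, ?_, ?_, ?_, ?_⟩ <;>
        rw [hta, Matrix.mul_apply, Fin.sum_univ_three]
      · rw [h1, Tsub_lower (a := a) 1 0 (by decide), Tsub_lower (a := a) 2 0 (by decide)]
        simp
      · rw [h2, Tsub_lower (a := t) 2 0 (by decide), Tsub_lower (a := t) 2 1 (by decide)]
        simp
      · rw [Tsub_lower (a := a) 2 1 (by decide)]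
        simp only [mul_zero, add_zero]
        exact dvd_add (Dvd.dvd.mul_left h3 _)
          (Dvd.dvd.mul_left ((pow_dvd_pow X hn').trans h5) _)
      · rw [h2]
        simp only [mul_zero, add_zero]
        refine V.add_mem ?_
          (hV _ (Dvd.dvd.mul_left ((pow_dvd_pow X (min_le_right n' n'')).trans h6) _))
        rw [hx]
        have : C x * (a : Matrix (Fin 3) (Fin 3) (Polynomial k)) 0 2 =
            x • (a : Matrix (Fin 3) (Fin 3) (Polynomial k)) 0 2 := by
          rw [Polynomial.smul_eq_C_mul]
        rw [this]
        exact V.smul_mem _ h4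
      · rw [Tsub_lower (a := t) 1 0 (by decide), Tsub_lower (a := a) 2 1 (by decide)]
        simp only [zero_mul, mul_zero, zero_add, add_zero]
        exact Dvd.dvd.mul_left h5 _
      · rw [Tsub_lower (a := t) 1 0 (by decide), h2]
        simp only [zero_mul, mul_zero, zero_add, add_zero]
        exact Dvd.dvd.mul_left h6 _)
    (by
      rintro a t ⟨h1, h2, h3, h4, h5, h6⟩
      have hta : ((a * t : Tsub k) : Matrix (Fin 3) (Fin 3) (Polynomial k)) =
          (a : Matrix (Fin 3) (Fin 3) (Polynomial k)) * t := rfl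
      obtain ⟨z, hz⟩ := Tsub_22 t
      refine ⟨?_, ?_, ?_, ?_, ?_, ?_⟩ <;>
        rw [hta, Matrix.mul_apply, Fin.sum_univ_three]
      · rw [h1, Tsub_lower (a := t) 1 0 (by decide), Tsub_lower (a := t) 2 0 (by decide)]
        simp
      · rw [h2, Tsub_lower (a := a) 2 0 (by decide), Tsub_lower (a := a) 2 1 (by decide)]
        simp
      · rw [h1, Tsub_lower (a := t) 2 1 (by decide)]
        simp only [zero_mul, mul_zero, zero_add, add_zero]
        exact Dvd.dvd.mul_right h3 _
      · rw [h1]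
        simp only [zero_mul, zero_add]
        refine V.add_mem
          (hV _ (Dvd.dvd.mul_right ((pow_dvd_pow X (min_le_left n' n'')).trans h3) _)) ?_
        rw [hz]
        have : (a : Matrix (Fin 3) (Fin 3) (Polynomial k)) 0 2 * C z =
            z • (a : Matrix (Fin 3) (Fin 3) (Polynomial k)) 0 2 := by
          rw [Polynomial.smul_eq_C_mul, mul_comm]
        rw [this]
        exact V.smul_mem _ h4
      · rw [Tsub_lower (a := a) 1 0 (by decide), Tsub_lower (a := t) 2 1 (by decide)]
        simp only [zero_mul, mul_zero, zero_add, add_zero]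
        exact Dvd.dvd.mul_right h5 _
      · rw [Tsub_lower (a := a) 1 0 (by decide)]
        simp only [zero_mul, zero_add]
        exact dvd_add (Dvd.dvd.mul_right ((pow_dvd_pow X hn'').trans h5) _)
          (Dvd.dvd.mul_right h6 _))

/-- The quotient algebra `A = T / I(n; n', n''; V)`. -/
def Aquot (n n' n'' : ℕ) (V : Submodule k (Polynomial k)) (hn' : n' ≤ n) (hn'' : n'' ≤ n)
    (hV : ∀ p : Polynomial k, X ^ min n' n'' ∣ p → p ∈ V) : Type _ :=
  (Itsi k n n' n'' V hn' hn'' hV).ringCon.Quotient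

instance (n n' n'' : ℕ) (V : Submodule k (Polynomial k)) (hn' : n' ≤ n) (hn'' : n'' ≤ n)
    (hV : ∀ p : Polynomial k, X ^ min n' n'' ∣ p → p ∈ V) :
    Ring (Aquot k n n' n'' V hn' hn'' hV) :=
  inferInstanceAs (Ring (Itsi k n n' n'' V hn' hn'' hV).ringCon.Quotient)

instance (n n' n'' : ℕ) (V : Submodule k (Polynomial k)) (hn' : n' ≤ n) (hn'' : n'' ≤ n)
    (hV : ∀ p : Polynomial k, X ^ min n' n'' ∣ p → p ∈ V) :
    Algebra k (Aquot k n n' n'' V hn' hn'' hV) :=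
  inferInstanceAs (Algebra k (Itsi k n n' n'' V hn' hn'' hV).ringCon.Quotient)

/-- The quotient map `T → A`. -/
def Amk (n n' n'' : ℕ) (V : Submodule k (Polynomial k)) (hn' : n' ≤ n) (hn'' : n'' ≤ n)
    (hV : ∀ p : Polynomial k, X ^ min n' n'' ∣ p → p ∈ V) :
    Tsub k →+* Aquot k n n' n'' V hn' hn'' hV :=
  RingCon.mk' (Itsi k n n' n'' V hn' hn'' hV).ringCon

/-!
A derivation of `T` killing `E₁₁, E₂₂, E₃₃` is determined by its data `(a, b, c)`: on the
entries `p` at positions `(1,2), (1,3), (2,2), (2,3)` it acts by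
`p ↦ a p + b p′, (a + c) p + b p′, b p′, c p + b p′`. It induces an inner derivation of `A`
iff `D - ad t` maps `T` into `I` for some `t ∈ T`. Testing this on `E₁₂, β E₂₂, E₂₃` gives
`β^{n'} ∣ a - t₁₁ + t₂₂`, `β^n ∣ b`, `β^{n''} ∣ c - t₂₂ + t₃₃`, so `β^m ∣ (a + c) - (t₁₁ - t₃₃)`,
and comparing constant terms (for `m ≥ 1`; for `m = 0` there is nothing to show) gives
`t₁₁ - t₃₃ = (a + c)(0)`.
Conversely, for `t = (a + c)(0) E₁₁ + u E₂₂` the derivation `D - ad t` has data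
`(a - (a + c)(0) + u, b, c - u)`, and `u` can be chosen to make the first and last entries
divisible by `β^{n'}` and `β^{n''}`; then every value of `D - ad t` lies in `I`.
-/

variable {k}

lemma TwoSidedIdeal.exists_mk'_commutator_iff {R : Type*} [Ring R] (I : TwoSidedIdeal R)
    (f : R → R) :
    (∃ α : I.ringCon.Quotient, ∀ x, RingCon.mk' I.ringCon (f x) =
      α * RingCon.mk' I.ringCon x - RingCon.mk' I.ringCon x * α) ↔
      ∃ t, ∀ x, f x - (t * x - x * t) ∈ I := by
  constructor
  · rintro ⟨α, hα⟩
    obtain ⟨t, rfl⟩ : ∃ t, RingCon.mk' I.ringCon t = α := Quotient.mk''_surjective α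
    refine ⟨t, fun x => (I.rel_iff _ _).mp (RingCon.eq _ |>.mp ?_)⟩
    simpa using hα x
  · rintro ⟨t, ht⟩
    refine ⟨RingCon.mk' _ t, fun x => ?_⟩
    rw [← map_mul, ← map_mul, ← map_sub]
    exact (RingCon.eq _).mpr ((I.rel_iff _ _).mpr (ht x))

lemma Polynomial.X_pow_dvd_sub_C_eval_zero {R : Type*} [CommRing R] {p : R[X]} {r : R} {m : ℕ}
    (h : X ^ m ∣ p - C r) : X ^ m ∣ p - C (p.eval 0) := by
  rcases Nat.eq_zero_or_pos m with rfl | hm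
  · simp
  · have hr : (p - C r).coeff 0 = 0 := X_dvd_iff.mp ((dvd_pow_self X hm.ne').trans h)
    rw [coeff_sub, coeff_C_zero, sub_eq_zero, coeff_zero_eq_eval_zero] at hr
    rwa [hr]

lemma exists_pow_dvd_add_and_pow_dvd_sub {R : Type*} [CommRing R] {y p q : R} {i j : ℕ}
    (h : y ^ min i j ∣ p + q) : ∃ u, y ^ i ∣ p + u ∧ y ^ j ∣ q - u := by
  rcases le_total i j with hij | hji
  · exact ⟨q, by rwa [min_eq_left hij] at h, by simp⟩
  · exact ⟨-p, by simp, by rwa [min_eq_right hji, add_comm, ← sub_neg_eq_add] at h⟩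

@[simp] lemma coe_tE11 : (tE11 k).1 = single 0 0 1 := rfl
@[simp] lemma coe_tE33 : (tE33 k).1 = single 2 2 1 := rfl
@[simp] lemma coe_tE12 (p : k[X]) : (tE12 k p).1 = single 0 1 p := rfl
@[simp] lemma coe_tE13 (p : k[X]) : (tE13 k p).1 = single 0 2 p := rfl
@[simp] lemma coe_tE22 (p : k[X]) : (tE22 k p).1 = single 1 1 p := rfl
@[simp] lemma coe_tE23 (p : k[X]) : (tE23 k p).1 = single 1 2 p := rfl

lemma tE22_zero : tE22 k 0 = 0 := Subtype.ext (single_zero _ _)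

lemma tE12_add (p q : k[X]) : tE12 k (p + q) = tE12 k p + tE12 k q :=
  Subtype.ext (single_add _ _ _ _)
lemma tE13_add (p q : k[X]) : tE13 k (p + q) = tE13 k p + tE13 k q :=
  Subtype.ext (single_add _ _ _ _)
lemma tE22_add (p q : k[X]) : tE22 k (p + q) = tE22 k p + tE22 k q :=
  Subtype.ext (single_add _ _ _ _)
lemma tE23_add (p q : k[X]) : tE23 k (p + q) = tE23 k p + tE23 k q :=
  Subtype.ext (single_add _ _ _ _)

lemma tE22_C (r : k) : tE22 k (C r) = r • tE22one k :=
  Subtype.ext (by simp [tE22one, smul_single, Polynomial.smul_eq_C_mul])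

lemma tE12_mul_tE22 (p q : k[X]) : tE12 k p * tE22 k q = tE12 k (p * q) :=
  Subtype.ext (single_mul_single_same _ _ _ _ _)
lemma tE22_mul_tE22 (p q : k[X]) : tE22 k p * tE22 k q = tE22 k (p * q) :=
  Subtype.ext (single_mul_single_same _ _ _ _ _)
lemma tE22_mul_tE23 (p q : k[X]) : tE22 k p * tE23 k q = tE23 k (p * q) :=
  Subtype.ext (single_mul_single_same _ _ _ _ _)
lemma tE12_mul_tE23 (p q : k[X]) : tE12 k p * tE23 k q = tE13 k (p * q) :=
  Subtype.ext (single_mul_single_same _ _ _ _ _)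

lemma eq_sum_tE (x : Tsub k) {r s : k} (hr : x.1 0 0 = C r) (hs : x.1 2 2 = C s) :
    x = r • tE11 k + tE12 k (x.1 0 1) + tE13 k (x.1 0 2) + tE22 k (x.1 1 1) +
      tE23 k (x.1 1 2) + s • tE33 k := by
  have hl := x.2.1
  ext i j
  fin_cases i <;> fin_cases j <;>
    simp [Polynomial.smul_eq_C_mul, hr, hs, hl 1 0 (by decide), hl 2 0 (by decide),
      hl 2 1 (by decide)]

def normalizedDer (a b c : k[X]) (x : Tsub k) : Tsub k :=
  tE12 k (a * x.1 0 1 + b * derivative (x.1 0 1)) +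
    tE13 k ((a + c) * x.1 0 2 + b * derivative (x.1 0 2)) +
    tE22 k (b * derivative (x.1 1 1)) + tE23 k (b * derivative (x.1 1 2) + c * x.1 1 2)

lemma coe_normalizedDer (a b c : k[X]) (x : Tsub k) : (normalizedDer a b c x).1 =
    single 0 1 (a * x.1 0 1 + b * derivative (x.1 0 1)) +
      single 0 2 ((a + c) * x.1 0 2 + b * derivative (x.1 0 2)) +
      single 1 1 (b * derivative (x.1 1 1)) + single 1 2 (b * derivative (x.1 1 2) + c * x.1 1 2) :=
  rfl

namespace IsDer

variable {D : Tsub k →ₗ[k] Tsub k} {a b c : k[X]}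

lemma map_tE22 (hD : IsDer k D) (hD2 : D (tE22one k) = 0) (hb : D (tE22 k X) = tE22 k b)
    (p : k[X]) :
    D (tE22 k p) = tE22 k (b * derivative p) := by
  induction p using Polynomial.induction_on with
  | C r => rw [tE22_C, map_smul, hD2, smul_zero, derivative_C, mul_zero, tE22_zero]
  | add p q hp hq => rw [tE22_add, map_add, hp, hq, derivative_add, mul_add, tE22_add]
  | monomial j r ih =>
    rw [pow_succ, ← mul_assoc, ← tE22_mul_tE22, hD, ih, hb, tE22_mul_tE22, tE22_mul_tE22,
      ← tE22_add]
    congr 1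
    simp only [derivative_mul, derivative_X, derivative_C, derivative_X_pow]
    ring

lemma map_tE12 (hD : IsDer k D) (hD2 : D (tE22one k) = 0) (ha : D (tE12 k 1) = tE12 k a)
    (hb : D (tE22 k X) = tE22 k b) (p : k[X]) :
    D (tE12 k p) = tE12 k (a * p + b * derivative p) := by
  rw [show tE12 k p = tE12 k 1 * tE22 k p by rw [tE12_mul_tE22, one_mul], hD, ha, hD.map_tE22 hD2 hb, tE12_mul_tE22, tE12_mul_tE22,
    ← tE12_add]
  congr 1
  ring

lemma map_tE23 (hD : IsDer k D) (hD2 : D (tE22one k) = 0) (hb : D (tE22 k X) = tE22 k b)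
    (hc : D (tE23 k 1) = tE23 k c) (p : k[X]) :
    D (tE23 k p) = tE23 k (b * derivative p + c * p) := by
  rw [show tE23 k p = tE22 k p * tE23 k 1 by rw [tE22_mul_tE23, mul_one], hD, hc, hD.map_tE22 hD2 hb, tE22_mul_tE23, tE22_mul_tE23,
    ← tE23_add]
  congr 1
  ring

lemma map_tE13 (hD : IsDer k D) (hD2 : D (tE22one k) = 0) (ha : D (tE12 k 1) = tE12 k a)
    (hb : D (tE22 k X) = tE22 k b) (hc : D (tE23 k 1) = tE23 k c) (p : k[X]) :
    D (tE13 k p) = tE13 k ((a + c) * p + b * derivative p) := by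
  rw [show tE13 k p = tE12 k p * tE23 k 1 by rw [tE12_mul_tE23, mul_one], hD, hc, hD.map_tE12 hD2 ha hb, tE12_mul_tE23, tE12_mul_tE23,
    ← tE13_add]
  congr 1
  ring

lemma eq_normalizedDer (hD : IsDer k D) (hD1 : D (tE11 k) = 0) (hD2 : D (tE22one k) = 0)
    (hD3 : D (tE33 k) = 0) (ha : D (tE12 k 1) = tE12 k a) (hb : D (tE22 k X) = tE22 k b)
    (hc : D (tE23 k 1) = tE23 k c) (x : Tsub k) : D x = normalizedDer a b c x := by
  obtain ⟨r, hr⟩ := Tsub_00 x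
  obtain ⟨s, hs⟩ := Tsub_22 x
  conv_lhs => rw [eq_sum_tE x hr hs]
  simp only [map_add, map_smul, hD1, hD3, smul_zero, zero_add, add_zero, hD.map_tE12 hD2 ha hb,
    hD.map_tE13 hD2 ha hb hc, hD.map_tE22 hD2 hb, hD.map_tE23 hD2 hb hc, normalizedDer]

end IsDer

lemma normalizedDer_mem_Icar {n n' n'' : ℕ} {V : Submodule k k[X]} (hn' : n' ≤ n) (hn'' : n'' ≤ n)
    (hV : ∀ p : k[X], X ^ min n' n'' ∣ p → p ∈ V) {a b c : k[X]} (ha : X ^ n' ∣ a)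
    (hb : X ^ n ∣ b) (hc : X ^ n'' ∣ c) (x : Tsub k) :
    normalizedDer a b c x ∈ Icar k n n' n'' V := by
  have hb' {j : ℕ} (hj : j ≤ n) : X ^ j ∣ b := (pow_dvd_pow X hj).trans hb
  have hac : X ^ min n' n'' ∣ a + c :=
    dvd_add ((pow_dvd_pow X (min_le_left _ _)).trans ha)
      ((pow_dvd_pow X (min_le_right _ _)).trans hc)
  refine ⟨by simp [coe_normalizedDer], by simp [coe_normalizedDer], ?_, ?_, ?_, ?_⟩ <;>
    simp only [coe_normalizedDer, Matrix.add_apply, single_apply_same, single_apply_of_ne,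
      Fin.reduceEq, zero_ne_one, one_ne_zero, and_false, and_true, and_self, not_false_eq_true,
      add_zero, zero_add]
  · exact dvd_add (ha.mul_right _) ((hb' hn').mul_right _)
  · exact hV _ (dvd_add (hac.mul_right _) ((hb' ((min_le_left _ _).trans hn')).mul_right _))
  · exact hb.mul_right _
  · exact dvd_add ((hb' hn'').mul_right _) (hc.mul_right _)

lemma normalizedDer_sub_commutator (a b c u : k[X]) (r : k) (x : Tsub k) :
    normalizedDer a b c x - ((r • tE11 k + tE22 k u) * x - x * (r • tE11 k + tE22 k u)) =
      normalizedDer (a - C r + u) b (c - u) x := by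
  have hl := x.2.1
  refine Subtype.ext (Matrix.ext fun i j => ?_)
  fin_cases i <;> fin_cases j <;>
    simp only [AddSubgroupClass.coe_sub, MulMemClass.coe_mul, AddMemClass.coe_add,
      SetLike.val_smul, coe_normalizedDer, coe_tE11, coe_tE22, smul_single, smul_eq_C_mul, mul_one,
      Matrix.sub_apply, Matrix.add_apply, mul_apply, Fin.sum_univ_three, single_apply_same,
      single_apply_of_ne, Fin.reduceEq, Fin.isValue, Fin.zero_eta, Fin.mk_one, Fin.reduceFinMk,
      zero_ne_one, one_ne_zero, and_false, and_true, false_and, and_self, not_false_eq_true,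
      hl 1 0 (by decide), hl 2 0 (by decide), hl 2 1 (by decide), zero_mul, mul_zero, add_zero,
      zero_add, Finset.sum_const_zero]
  all_goals ring

lemma mem_Itsi {n n' n'' : ℕ} {V : Submodule k k[X]} (hn' : n' ≤ n) (hn'' : n'' ≤ n)
    (hV : ∀ p : k[X], X ^ min n' n'' ∣ p → p ∈ V) (x : Tsub k) :
    x ∈ Itsi k n n' n'' V hn' hn'' hV ↔ x ∈ Icar k n n' n'' V :=
  TwoSidedIdeal.mem_mk' _ _ _ _ _ _ _

lemma dvd_of_sub_commutator_mem_Icar {n n' n'' : ℕ} {V : Submodule k k[X]}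
    {D : Tsub k →ₗ[k] Tsub k} {a b c : k[X]} (ha : D (tE12 k 1) = tE12 k a)
    (hb : D (tE22 k X) = tE22 k b) (hc : D (tE23 k 1) = tE23 k c) {t : Tsub k}
    (ht : ∀ x, D x - (t * x - x * t) ∈ Icar k n n' n'' V) :
    X ^ min n' n'' ∣ (a + c) - C ((a + c).eval 0) ∧ X ^ n ∣ b := by
  obtain ⟨r, hr⟩ := Tsub_00 t
  obtain ⟨s, hs⟩ := Tsub_22 t
  have h12 : X ^ n' ∣ a - (C r - t.1 1 1) := by
    simpa [ha, hr] using (ht (tE12 k 1)).2.2.1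
  have h22 : X ^ n ∣ b := by
    simpa [hb, mul_comm X] using (ht (tE22 k X)).2.2.2.2.1
  have h23 : X ^ n'' ∣ c - (t.1 1 1 - C s) := by
    simpa [hc, hs] using (ht (tE23 k 1)).2.2.2.2.2
  refine ⟨X_pow_dvd_sub_C_eval_zero (r := r - s) ?_, h22⟩
  convert dvd_add ((pow_dvd_pow X (min_le_left _ _)).trans h12)
    ((pow_dvd_pow X (min_le_right _ _)).trans h23) using 1
  rw [C_sub]
  ring

theorem stmt6_general (n n' n'' : ℕ)
    (hn' : n' ≤ n) (hn'' : n'' ≤ n) (V : Submodule k (Polynomial k))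
    (hV : ∀ p : Polynomial k, X ^ min n' n'' ∣ p → p ∈ V)
    (D : Tsub k →ₗ[k] Tsub k) (hD : IsDer k D)
    (hD1 : D (tE11 k) = 0) (hD2 : D (tE22one k) = 0) (hD3 : D (tE33 k) = 0)
    (a b c : Polynomial k)
    (ha : D (tE12 k 1) = tE12 k a) (hb : D (tE22 k X) = tE22 k b)
    (hc : D (tE23 k 1) = tE23 k c) :
    (∃ α : Aquot k n n' n'' V hn' hn'' hV, ∀ x : Tsub k,
        Amk k n n' n'' V hn' hn'' hV (D x) =
          α * Amk k n n' n'' V hn' hn'' hV x - Amk k n n' n'' V hn' hn'' hV x * α) ↔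
      (X ^ min n' n'' ∣ (a + c) - C ((a + c).eval 0) ∧ X ^ n ∣ b) := by
  refine (TwoSidedIdeal.exists_mk'_commutator_iff (Itsi k n n' n'' V hn' hn'' hV) D).trans ?_
  simp only [mem_Itsi]
  constructor
  · rintro ⟨t, ht⟩
    exact dvd_of_sub_commutator_mem_Icar ha hb hc ht
  · rintro ⟨hac, hbn⟩
    obtain ⟨u, hu₁, hu₂⟩ :=
      exists_pow_dvd_add_and_pow_dvd_sub (p := a - C ((a + c).eval 0)) (q := c)
        (by rwa [sub_add_eq_add_sub])
    refine ⟨(a + c).eval 0 • tE11 k + tE22 k u, fun x => ?_⟩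
    rw [hD.eq_normalizedDer hD1 hD2 hD3 ha hb hc, normalizedDer_sub_commutator]
    exact normalizedDer_mem_Icar hn' hn'' hV hu₁ hbn hu₂ x

/-- a normalized derivation of `T` with data `(a,b,c)` preserving
`I(n; n', n''; V)` induces an inner derivation of `A = T/I(n; n', n''; V)` iff
`β^m ∣ (a+c) − (a+c)(0)` and `β^n ∣ b`. -/
theorem stmt6 (n n' n'' : ℕ) (h2 : 2 ≤ n) (h1' : 1 ≤ n') (h1'' : 1 ≤ n'')
    (hn' : n' ≤ n) (hn'' : n'' ≤ n) (V : Submodule k (Polynomial k))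
    (hV : ∀ p : Polynomial k, X ^ min n' n'' ∣ p → p ∈ V)
    (D : Tsub k →ₗ[k] Tsub k) (hD : IsDer k D)
    (hD1 : D (tE11 k) = 0) (hD2 : D (tE22one k) = 0) (hD3 : D (tE33 k) = 0)
    (a b c : Polynomial k)
    (ha : D (tE12 k 1) = tE12 k a) (hb : D (tE22 k X) = tE22 k b)
    (hc : D (tE23 k 1) = tE23 k c)
    (hDI : ∀ x ∈ Icar k n n' n'' V, D x ∈ Icar k n n' n'' V) :
    (∃ α : Aquot k n n' n'' V hn' hn'' hV, ∀ x : Tsub k,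
        Amk k n n' n'' V hn' hn'' hV (D x) =
          α * Amk k n n' n'' V hn' hn'' hV x - Amk k n n' n'' V hn' hn'' hV x * α) ↔
      (X ^ min n' n'' ∣ (a + c) - C ((a + c).eval 0) ∧ X ^ n ∣ b) :=
  stmt6_general n n' n'' hn' hn'' V hV D hD hD1 hD2 hD3 a b c ha hb hc

end
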